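/- arXiv:2511.14443 — 3 statements merged into one kernel-verified Lean document; each statement's English description precedes it below -/
import Mathlib

section
/- (Case m = 2.) Let 3 ≤ ℓ ≤ n and let c_ℓ ∈ ℝ^n be the vector with entries c_{ℓ,k} = θ_ℓ − θ_{k+1} for 1 ≤ k ≤ ℓ−2 and c_{ℓ,k} = 0 for ℓ−1 ≤ k ≤ n. Then c_ℓ^T Z = κ_ℓ e_{ℓ−2}^T, where e_{ℓ−2} is the (ℓ−2)-th canonical unit vector of ℝ^{n−2} and κ_ℓ = (θ_ℓ−θ_{ℓ−1})²(θ_{ℓ+1}−θ_ℓ)² / (18(θ_{ℓ+1}−θ_{ℓ−1})). -/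
open scoped BigOperators
open MeasureTheory Matrix

noncomputable def omegaB (θ : ℕ → ℝ) (j k : ℕ) (x : ℝ) : ℝ :=
  if θ k < θ (k + j) then (x - θ k) / (θ (k + j) - θ k) else 0

noncomputable def Nspl (θ : ℕ → ℝ) : ℕ → ℕ → ℝ → ℝ
  | 0, _, _ => 0
  | 1, k, x => if θ k ≤ x ∧ x < θ (k + 1) then 1 else 0
  | j + 2, k, x =>
      omegaB θ (j + 1) k x * Nspl θ (j + 1) k x
        + (1 - omegaB θ (j + 1) (k + 1) x) * Nspl θ (j + 1) (k + 1) x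

noncomputable def Gram (θ : ℕ → ℝ) (a b : ℝ) (m n : ℕ) : Matrix (Fin n) (Fin n) ℝ :=
  Matrix.of fun j k => ∫ x in a..b, Nspl θ m (j.1 + 1) x * Nspl θ m (k.1 + 1) x

noncomputable def Dmat (θ : ℕ → ℝ) (ord p q : ℕ) : Matrix (Fin p) (Fin q) ℝ :=
  Matrix.of fun k j =>
    if j.1 = k.1 then (ord : ℝ) / (θ (k.1 + 1 + ord) - θ (k.1 + 1))
    else if j.1 = k.1 + 1 then -((ord : ℝ) / (θ (k.1 + 2 + ord) - θ (k.1 + 2)))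
    else 0

noncomputable def Dprod (θ : ℕ → ℝ) (m n : ℕ) : (ν : ℕ) → Matrix (Fin (n - ν - 1)) (Fin n) ℝ
  | 0 => Dmat θ m (n - 1) n
  | ν + 1 => Dmat θ (m + ν + 1) (n - (ν + 1) - 1) (n - ν - 1) * Dprod θ m n ν

noncomputable def DprodFull (θ : ℕ → ℝ) (m n : ℕ) (hm : 1 ≤ m) :
    Matrix (Fin (n - m)) (Fin n) ℝ :=
  Matrix.reindex (finCongr (by omega : n - (m - 1) - 1 = n - m)) (Equiv.refl _)
    (Dprod θ m n (m - 1))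

noncomputable def knotMult (θ : ℕ → ℝ) (N ℓ : ℕ) : ℕ :=
  ((Finset.Icc 1 N).filter fun i => θ i = θ ℓ).card

structure IsOpenKnot (θ : ℕ → ℝ) (a b : ℝ) (m n : ℕ) : Prop where
  mono : ∀ i, 1 ≤ i → i < n + m → θ i ≤ θ (i + 1)
  left : ∀ i, 1 ≤ i → i ≤ m → θ i = a
  right : ∀ i, n + 1 ≤ i → i ≤ n + m → θ i = b
  intMult : ∀ k, m + 1 ≤ k → k ≤ n → knotMult θ (n + m) k ≤ m - 1

noncomputable def esymmF (r : ℕ) (s : Finset ℕ) (y : ℕ → ℝ) : ℝ :=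
  ∑ t ∈ s.powersetCard r, ∏ i ∈ t, y i

noncomputable def cVec (θ : ℕ → ℝ) (m n ℓ ν : ℕ) : Fin n → ℝ :=
  fun k =>
    if k.1 + 1 ≤ ℓ - m + ν then
      esymmF (m - 1 - ν) (Finset.Icc (k.1 + 2) (k.1 + m)) (fun i => θ ℓ - θ i)
        / ((m - 1).choose ν : ℝ)
    else 0

noncomputable def Fpoly (ν : ℕ) (s : Finset ℕ) (y : ℕ → ℝ) : ℝ :=
  (2 ^ ν * (ν.factorial : ℝ))⁻¹ *
    ∑ f ∈ (Fintype.piFinset fun _ : Fin (2 * ν) => s).filter (fun f => Function.Injective f),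
      ∏ i : Fin ν,
        (y (f ⟨i.1, by have := i.2; omega⟩) - y (f ⟨ν + i.1, by have := i.2; omega⟩)) ^ 2

noncomputable def uCoef (θ : ℕ → ℝ) (m ν k : ℕ) : ℝ :=
  ((m + ν : ℕ) : ℝ) / (θ (k + m + ν) - θ k) * Fpoly ν (Finset.Icc (k + 1) (k + m + ν - 1)) θ

noncomputable def Smat (θ : ℕ → ℝ) (m n : ℕ) : ℕ → Matrix (Fin n) (Fin n) ℝ
  | 0 => Matrix.diagonal fun k : Fin n => uCoef θ m 0 (k.1 + 1)
  | ν + 1 => Smat θ m n ν +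
      (Dprod θ m n ν)ᵀ *
        Matrix.diagonal (fun k : Fin (n - ν - 1) => uCoef θ m (ν + 1) (k.1 + 1)) *
        Dprod θ m n ν
noncomputable def alpha2 (θ : ℕ → ℝ) (n j : ℕ) : ℝ :=
  if 1 ≤ j ∧ j ≤ n - 1 then (θ (j + 2) - θ (j + 1)) ^ 2 / (θ (j + 3) - θ j) else 0

noncomputable def beta2 (θ : ℕ → ℝ) (j : ℕ) : ℝ :=
  -(2 * (θ (j + 2) - θ (j + 1)) ^ 2) /
    ((θ (j + 2) - θ j) * (θ (j + 3) - θ j) * (θ (j + 3) - θ (j + 1)))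

/-- The approximate-dual matrix `S` for `m = 2` (symmetric tridiagonal). -/
noncomputable def S2 (θ : ℕ → ℝ) (n : ℕ) : Matrix (Fin n) (Fin n) ℝ :=
  Matrix.of fun i k =>
    if k.1 = i.1 then
      2 / (θ (i.1 + 3) - θ (i.1 + 1))
        + 2 * (alpha2 θ n i.1 + alpha2 θ n (i.1 + 1)) / (θ (i.1 + 3) - θ (i.1 + 1)) ^ 2
    else if k.1 = i.1 + 1 then beta2 θ (i.1 + 1)
    else if i.1 = k.1 + 1 then beta2 θ (k.1 + 1)
    else 0

/-- The explicit matrix `Z` for `m = 2` (lower triangular, three nonzero diagonals). -/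
noncomputable def Zmat2 (θ : ℕ → ℝ) (n : ℕ) : Matrix (Fin n) (Fin (n - 2)) ℝ :=
  Matrix.of fun i j =>
    if i.1 = j.1 then
      (θ (j.1 + 3) - θ (j.1 + 2)) * (θ (j.1 + 4) - θ (j.1 + 3)) ^ 2
        / (18 * (θ (j.1 + 4) - θ (j.1 + 2)))
    else if i.1 = j.1 + 1 then
      -((θ (j.1 + 3) - θ (j.1 + 2)) * (θ (j.1 + 4) - θ (j.1 + 3)) / 18)
    else if i.1 = j.1 + 2 then
      (θ (j.1 + 3) - θ (j.1 + 2)) ^ 2 * (θ (j.1 + 4) - θ (j.1 + 3))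
        / (18 * (θ (j.1 + 4) - θ (j.1 + 2)))
    else 0

/-- The approximate-dual matrix `S = U₀ + D₃ᵀ U₁ D₃ + D₃ᵀ D₄ᵀ U₂ D₄ D₃` for `m = 3`. -/
noncomputable def S3 (θ : ℕ → ℝ) (n : ℕ) : Matrix (Fin n) (Fin n) ℝ :=
  Matrix.diagonal (fun k : Fin n => uCoef θ 3 0 (k.1 + 1))
    + (Dmat θ 3 (n - 1) n)ᵀ *
        Matrix.diagonal (fun k : Fin (n - 1) => uCoef θ 3 1 (k.1 + 1)) * Dmat θ 3 (n - 1) n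
    + (Dmat θ 4 (n - 2) (n - 1) * Dmat θ 3 (n - 1) n)ᵀ *
        Matrix.diagonal (fun k : Fin (n - 2) => uCoef θ 3 2 (k.1 + 1)) *
        (Dmat θ 4 (n - 2) (n - 1) * Dmat θ 3 (n - 1) n)

/-- case `m = 2`. For `3 ≤ ℓ ≤ n` and the coefficient vector `c_ℓ` of the
truncated power `(θ_ℓ - x)₊`, one has `c_ℓᵀ Z = κ_ℓ e_{ℓ-2}ᵀ`. -/
theorem stmt7 (a b : ℝ) (hab : a < b) (n : ℕ) (hn : 2 ≤ n) (θ : ℕ → ℝ)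
    (hθ1 : θ 1 = a) (hθ2 : θ 2 = a) (hθ3 : θ (n + 1) = b) (hθ4 : θ (n + 2) = b)
    (hstrict : ∀ i, 2 ≤ i → i ≤ n → θ i < θ (i + 1))
    (ℓ : ℕ) (hℓ1 : 3 ≤ ℓ) (hℓ2 : ℓ ≤ n)
    (c : Fin n → ℝ)
    (hc : ∀ k : Fin n, c k = if k.1 + 1 ≤ ℓ - 2 then θ ℓ - θ (k.1 + 2) else 0) :
    Matrix.vecMul c (Zmat2 θ n) = fun k : Fin (n - 2) =>
      if k.1 + 1 = ℓ - 2 then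
        (θ ℓ - θ (ℓ - 1)) ^ 2 * (θ (ℓ + 1) - θ ℓ) ^ 2 / (18 * (θ (ℓ + 1) - θ (ℓ - 1)))
      else 0 := by
  funext k
  have hk := k.2
  have h1 := hstrict (k.1+2) (by omega) (by omega)
  have h2 := hstrict (k.1+3) (by omega) (by omega)
  have e1 : k.1 + 2 + 1 = k.1 + 3 := by omega
  have e2 : k.1 + 3 + 1 = k.1 + 4 := by omega
  rw [e1] at h1; rw [e2] at h2
  have hd : θ (k.1 + 4) - θ (k.1 + 2) ≠ 0 := by linarith
  simp only [Matrix.vecMul, dotProduct, Zmat2, Matrix.of_apply, hc]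
  rw [Fin.sum_univ_eq_sum_range (fun i =>
    (if i + 1 ≤ ℓ - 2 then θ ℓ - θ (i + 2) else 0) *
      (if i = k.1 then
        (θ (k.1 + 3) - θ (k.1 + 2)) * (θ (k.1 + 4) - θ (k.1 + 3)) ^ 2
          / (18 * (θ (k.1 + 4) - θ (k.1 + 2)))
      else if i = k.1 + 1 then
        -((θ (k.1 + 3) - θ (k.1 + 2)) * (θ (k.1 + 4) - θ (k.1 + 3)) / 18)
      else if i = k.1 + 2 then
        (θ (k.1 + 3) - θ (k.1 + 2)) ^ 2 * (θ (k.1 + 4) - θ (k.1 + 3))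
          / (18 * (θ (k.1 + 4) - θ (k.1 + 2)))
      else 0))]
  have hsub : ({k.1, k.1 + 1, k.1 + 2} : Finset ℕ) ⊆ Finset.range n := by
    intro x hx
    simp only [Finset.mem_insert, Finset.mem_singleton] at hx
    simp only [Finset.mem_range]
    omega
  rw [← Finset.sum_subset hsub (by
    intro x _ hx
    simp only [Finset.mem_insert, Finset.mem_singleton, not_or] at hx
    obtain ⟨hx1, hx2, hx3⟩ := hx
    simp [hx1, hx2, hx3])]
  rw [Finset.sum_insert (by simp), Finset.sum_insert (by simp),
    Finset.sum_singleton]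
  have n1 : ¬ (k.1 + 1 = k.1) := by omega
  have n2 : ¬ (k.1 + 2 = k.1) := by omega
  have n3 : ¬ (k.1 + 2 = k.1 + 1) := by omega
  simp only [eq_self_iff_true, if_true, if_neg n1, if_neg n2, if_neg n3]
  by_cases hcase : k.1 + 1 = ℓ - 2
  · rw [if_pos hcase, if_pos (show k.1 + 1 ≤ ℓ - 2 by omega),
      if_neg (show ¬ k.1 + 1 + 1 ≤ ℓ - 2 by omega),
      if_neg (show ¬ k.1 + 2 + 1 ≤ ℓ - 2 by omega)]
    have g1 : k.1 + 2 = ℓ - 1 := by omega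
    have g2 : k.1 + 3 = ℓ := by omega
    have g3 : k.1 + 4 = ℓ + 1 := by omega
    have g4 : ℓ - 1 + 1 = ℓ := by omega
    rw [g1, g2, g3]
    ring
  · rw [if_neg hcase]
    by_cases hlt : k.1 + 1 < ℓ - 2
    · have e3 : k.1 + 1 + 2 = k.1 + 3 := by omega
      have e4 : k.1 + 2 + 2 = k.1 + 4 := by omega
      rw [if_pos (show k.1 + 1 ≤ ℓ - 2 by omega),
        if_pos (show k.1 + 1 + 1 ≤ ℓ - 2 by omega), e3]
      by_cases hlt2 : k.1 + 2 + 1 ≤ ℓ - 2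
      · rw [if_pos hlt2, e4]
        field_simp
        ring
      · rw [if_neg hlt2]
        have hℓeq : ℓ = k.1 + 4 := by omega
        rw [hℓeq]
        field_simp
        ring
    · rw [if_neg (show ¬ k.1 + 1 ≤ ℓ - 2 by omega),
        if_neg (show ¬ k.1 + 1 + 1 ≤ ℓ - 2 by omega),
        if_neg (show ¬ k.1 + 2 + 1 ≤ ℓ - 2 by omega)]
      ring
end

section
/- (Marsden identity for truncated powers.) Let θ_ℓ (m+1 ≤ ℓ ≤ n) be an interior knot of Θ with θ_ℓ > θ_{ℓ−1} and multiplicity μ in Θ. Then for every integer 0 ≤ ν ≤ μ−1 and every x ∈ [a,b): binom(m−1,ν)·(θ_ℓ − x)_+^{m−1−ν} = Σ_{k=1}^{ℓ−m+ν} σ_{m−1−ν}(θ_ℓ−θ_{k+1},…,θ_ℓ−θ_{k+m−1})·N_{m,k}(x). -/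
open scoped BigOperators
open MeasureTheory Matrix

/-! Marsden's identity `(t - x)^(m-1) = ∑ₖ ∏_{i=k+1}^{k+m-1} (t - θᵢ) N_{m,k}(x)` on `[a, b)` follows
by induction on the order from the Cox–de Boor recursion, because on the support of `N_{j,k}` the
weight `ω_{j,k}(x)` is the barycentric coordinate of `x` in `[θ_k, θ_{k+j}]`. Putting `t = θ_ℓ + u`
and comparing coefficients of `u^ν` gives the claimed identity with the sum running over all
`k ≤ n`. The superfluous terms vanish: the knots `θ_ℓ = ⋯ = θ_{ℓ+ν}` coincide, so for
`ℓ - m + ν < k < ℓ` the window `θ_{k+1}, …, θ_{k+m-1}` contains `ν + 1` zeros of `θ_ℓ - θᵢ`,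
which kill `σ_{m-1-ν}`, while for `k ≥ ℓ` the B-spline `N_{m,k}` vanishes left of `θ_ℓ`.
For `x ≥ θ_ℓ` both sides vanish, the remaining B-splines being supported left of
`θ_{ℓ+ν} = θ_ℓ`. -/

open Finset

section BSpline

variable {θ : ℕ → ℝ}

lemma IsOpenKnot.monotoneOn {a b : ℝ} {m n : ℕ} (hθ : IsOpenKnot θ a b m n) :
    MonotoneOn θ (Set.Icc 1 (n + m)) :=
  monotoneOn_of_le_succ Set.ordConnected_Icc fun i _ hi hi' => by
    rw [Order.succ_eq_add_one] at hi' ⊢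
    exact hθ.mono i hi.1 (by simp only [Set.mem_Icc] at hi'; omega)

lemma Nspl_eq_zero_of_lt {j k : ℕ} {x : ℝ} (hθ : MonotoneOn θ (Set.Icc k (k + j)))
    (hx : x < θ k) : Nspl θ j k x = 0 := by
  induction j generalizing k with
  | zero => rfl
  | succ j ih =>
    rcases j with _ | j
    · simp [Nspl, hx.not_ge]
    · have hk : θ k ≤ θ (k + 1) := hθ ⟨le_rfl, by omega⟩ ⟨by omega, by omega⟩ (by omega)
      simp only [Nspl, ih (hθ.mono (Set.Icc_subset_Icc le_rfl (by omega))) hx,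
        ih (k := k + 1) (hθ.mono (Set.Icc_subset_Icc (by omega) (by omega))) (hx.trans_le hk),
        mul_zero, add_zero]

lemma Nspl_eq_zero_of_le {j k : ℕ} {x : ℝ} (hθ : MonotoneOn θ (Set.Icc k (k + j)))
    (hx : θ (k + j) ≤ x) : Nspl θ j k x = 0 := by
  induction j generalizing k with
  | zero => rfl
  | succ j ih =>
    rcases j with _ | j
    · simp [Nspl, hx]
    · have hk : θ (k + (j + 1)) ≤ θ (k + (j + 1 + 1)) :=
        hθ ⟨by omega, by omega⟩ ⟨by omega, le_rfl⟩ (by omega)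
      simp only [Nspl, ih (hθ.mono (Set.Icc_subset_Icc le_rfl (by omega))) (hk.trans hx),
        ih (k := k + 1) (hθ.mono (Set.Icc_subset_Icc (by omega) (by omega)))
          (by rwa [show k + 1 + (j + 1) = k + (j + 1 + 1) by omega]), mul_zero, add_zero]

lemma knot_add_omegaB_mul_Nspl {j k : ℕ} (hθ : MonotoneOn θ (Set.Icc k (k + j))) (x : ℝ) :
    (θ k + omegaB θ j k x * (θ (k + j) - θ k)) * Nspl θ j k x = x * Nspl θ j k x := by
  unfold omegaB
  split_ifs with h
  · rw [div_mul_cancel₀ _ (sub_ne_zero.2 h.ne'), add_sub_cancel]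
  · have hkj : θ (k + j) = θ k := (not_lt.1 h).antisymm (hθ (by simp) (by simp) (by omega))
    rcases lt_or_ge x (θ k) with hx | hx
    · rw [Nspl_eq_zero_of_lt hθ hx, mul_zero, mul_zero]
    · rw [Nspl_eq_zero_of_le hθ (hkj ▸ hx), mul_zero, mul_zero]

lemma sum_range_Nspl_one {M : ℕ} {x : ℝ} (hθ : MonotoneOn θ (Set.Icc 1 (M + 1)))
    (hx₁ : θ 1 ≤ x) (hx₂ : x < θ (M + 1)) :
    ∑ k ∈ range M, Nspl θ 1 (k + 1) x = 1 := by
  let below : ℕ → ℝ := fun k => if x < θ (k + 1) then 1 else 0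
  have htel : ∀ k ∈ range M, Nspl θ 1 (k + 1) x = below (k + 1) - below k := by
    intro k hk
    rw [mem_range] at hk
    have : θ (k + 1) ≤ θ (k + 1 + 1) := hθ ⟨by omega, by omega⟩ ⟨by omega, by omega⟩ (by omega)
    simp only [Nspl, below, ite_and]
    split_ifs <;> linarith
  rw [sum_congr rfl htel, sum_range_sub below]
  simp [below, hx₂, hx₁.not_gt]

lemma prod_Ioc_succ_bot {M : Type*} [CommMonoid M] (f : ℕ → M) (k d : ℕ) :
    ∏ i ∈ Ioc k (k + (d + 1)), f i = f (k + 1) * ∏ i ∈ Ioc (k + 1) (k + 1 + d), f i := by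
  rw [← Icc_add_one_left_eq_Ioc, mul_prod_Ioc_eq_prod_Icc (by omega), add_right_comm,
    add_assoc]

theorem marsden_identity {M d : ℕ} {x : ℝ} (hθ : MonotoneOn θ (Set.Icc 1 (M + d + 1)))
    (hx₁ : θ (d + 1) ≤ x) (hx₂ : x < θ (M + 1)) (t : ℝ) :
    ∑ k ∈ range M, (∏ i ∈ Ioc (k + 1) (k + 1 + d), (t - θ i)) * Nspl θ (d + 1) (k + 1) x =
      (t - x) ^ d := by
  induction d generalizing M with
  | zero => simpa using sum_range_Nspl_one hθ hx₁ hx₂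
  | succ d ih =>
    let P : ℕ → ℕ → ℝ := fun e k => ∏ i ∈ Ioc k (k + e), (t - θ i)
    let g : ℕ → ℝ := fun k => P (d + 1) (k + 1) * (omegaB θ (d + 1) (k + 1) x *
      Nspl θ (d + 1) (k + 1) x)
    let h : ℕ → ℝ := fun k => P (d + 1) k * ((1 - omegaB θ (d + 1) (k + 1) x) *
      Nspl θ (d + 1) (k + 1) x)
    have hg : g M = 0 := by
      have : Nspl θ (d + 1) (M + 1) x = 0 :=
        Nspl_eq_zero_of_lt (hθ.mono (Set.Icc_subset_Icc (by omega) (by omega))) hx₂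
      simp only [g, this, mul_zero]
    have hh : h 0 = 0 := by
      have : Nspl θ (d + 1) 1 x = 0 :=
        Nspl_eq_zero_of_le (hθ.mono (Set.Icc_subset_Icc le_rfl (by omega))) (by rwa [add_comm])
      simp only [h, zero_add, this, mul_zero]
    have hgh : ∀ k ∈ range (M + 1),
        g k + h k = (t - x) * (P d (k + 1) * Nspl θ (d + 1) (k + 1) x) := by
      intro k hk
      rw [mem_range] at hk
      have hlerp := knot_add_omegaB_mul_Nspl (j := d + 1) (k := k + 1)
        (hθ.mono (Set.Icc_subset_Icc (by omega) (by omega))) x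
      have hright : P (d + 1) (k + 1) = P d (k + 1) * (t - θ (k + 1 + (d + 1))) :=
        prod_Ioc_succ_top (Nat.le_add_right _ _) _
      have hleft : P (d + 1) k = (t - θ (k + 1)) * P d (k + 1) := prod_Ioc_succ_bot _ k d
      simp only [g, h, hright, hleft]
      linear_combination (-P d (k + 1)) * hlerp
    have hx₁' : θ (d + 1) ≤ x :=
      (hθ ⟨by omega, by omega⟩ ⟨by omega, by omega⟩ (by omega)).trans hx₁
    have hx₂' : x < θ (M + 1 + 1) :=
      hx₂.trans_le (hθ ⟨by omega, by omega⟩ ⟨by omega, by omega⟩ (by omega))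
    calc ∑ k ∈ range M, P (d + 1) (k + 1) * Nspl θ (d + 1 + 1) (k + 1) x
        = ∑ k ∈ range M, (g k + h (k + 1)) := by
          refine sum_congr rfl fun k _ => ?_
          simp only [g, h, Nspl]
          ring
      _ = ∑ k ∈ range (M + 1), (g k + h k) := by
          rw [sum_add_distrib, sum_add_distrib, sum_range_succ g, sum_range_succ' h, hg, hh]
          ring
      _ = (t - x) * ∑ k ∈ range (M + 1), P d (k + 1) * Nspl θ (d + 1) (k + 1) x := by
          rw [sum_congr rfl hgh, mul_sum]
      _ = (t - x) ^ (d + 1) := by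
          rw [ih (hθ.mono (Set.Icc_subset_Icc le_rfl (by omega))) hx₁' hx₂', pow_succ']

end BSpline

section TruncatedPower

variable {θ : ℕ → ℝ}

lemma sum_Icc_one_eq_sum_range {M : Type*} [AddCommMonoid M] (f : ℕ → M) (n : ℕ) :
    ∑ k ∈ Icc 1 n, f k = ∑ k ∈ range n, f (k + 1) := by
  rw [range_eq_Ico, sum_Ico_add' f 0 n 1, zero_add, Ico_add_one_right_eq_Icc]

open Polynomial in
theorem choose_mul_pow_eq_sum_esymmF_mul_Nspl {m n r : ℕ} {x : ℝ} (hr : r < m)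
    (hθ : MonotoneOn θ (Set.Icc 1 (n + m))) (hx₁ : θ m ≤ x) (hx₂ : x < θ (n + 1)) (s : ℝ) :
    ((m - 1).choose r : ℝ) * (s - x) ^ (m - 1 - r) =
      ∑ k ∈ Icc 1 n,
        esymmF (m - 1 - r) (Icc (k + 1) (k + m - 1)) (fun i => s - θ i) * Nspl θ m k x := by
  obtain ⟨d, rfl⟩ : ∃ d, m = d + 1 := ⟨m - 1, by omega⟩
  simp only [Nat.add_sub_cancel, Nat.add_succ_sub_one, sum_Icc_one_eq_sum_range,
    Icc_add_one_left_eq_Ioc]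
  have hpoly : (X + C (s - x)) ^ d = ∑ k ∈ range n,
      C (Nspl θ (d + 1) (k + 1) x) * ∏ i ∈ Ioc (k + 1) (k + 1 + d), (X + C (s - θ i)) := by
    refine Polynomial.funext fun u => ?_
    rw [← add_assoc] at hθ
    simp only [eval_pow, eval_add, eval_X, eval_C, eval_finsetSum, eval_mul, eval_prod]
    rw [← add_sub_assoc, ← marsden_identity hθ hx₁ hx₂ (u + s)]
    refine sum_congr rfl fun k _ => ?_
    rw [mul_comm]
    congr 1
    exact prod_congr rfl fun i _ => by ring
  have hcoeff := congrArg (coeff · r) hpoly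
  simp only [coeff_X_add_C_pow, finsetSum_coeff, coeff_C_mul] at hcoeff
  rw [mul_comm, hcoeff]
  refine sum_congr rfl fun k _ => ?_
  rw [prod_X_add_C_coeff _ _ (by simp; omega), Nat.card_Ioc, Nat.add_sub_cancel_left, mul_comm]
  rfl

lemma esymmF_eq_zero_of_card_lt {r : ℕ} {s Z : Finset ℕ} {y : ℕ → ℝ} (hZ : Z ⊆ s)
    (hy : ∀ i ∈ Z, y i = 0) (hcard : #s < r + #Z) : esymmF r s y = 0 := by
  refine sum_eq_zero fun t ht => ?_
  obtain ⟨hts, rfl⟩ := mem_powersetCard.1 ht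
  obtain ⟨i, hit, hiZ⟩ : ∃ i ∈ t, i ∈ Z := by
    by_contra! hdisj
    have := card_le_card (union_subset hts hZ)
    rw [card_union_of_disjoint (disjoint_left.2 hdisj)] at this
    omega
  exact prod_eq_zero hit (hy i hiZ)

lemma esymmF_sub_knot_eq_zero {m ℓ ν k : ℕ} (hflat : ∀ i ≤ ν, θ (ℓ + i) = θ ℓ) (hν : ν < m)
    (hk₁ : ℓ + ν < k + m) (hk₂ : k < ℓ) :
    esymmF (m - 1 - ν) (Icc (k + 1) (k + m - 1)) (fun i => θ ℓ - θ i) = 0 := by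
  refine esymmF_eq_zero_of_card_lt (Z := Icc ℓ (ℓ + ν)) (fun i hi => ?_) (fun i hi => ?_)
    (by simp only [Nat.card_Icc]; omega)
  · rw [mem_Icc] at hi ⊢
    omega
  · rw [mem_Icc] at hi
    rw [← Nat.add_sub_cancel' hi.1, hflat _ (by omega), sub_self]

lemma knot_add_eq_of_lt_knotMult {N ℓ ν i : ℕ} (hθ : MonotoneOn θ (Set.Icc 1 N)) (hℓ : 2 ≤ ℓ)
    (hℓν : ℓ + ν ≤ N) (hsep : θ (ℓ - 1) < θ ℓ) (hν : ν + 1 ≤ knotMult θ N ℓ) (hi : i ≤ ν) :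
    θ (ℓ + i) = θ ℓ := by
  by_contra hne
  have hlt : θ ℓ < θ (ℓ + i) :=
    (hθ ⟨by omega, by omega⟩ ⟨by omega, by omega⟩ (by omega)).lt_of_ne' hne
  have hsub : (Icc 1 N).filter (fun j => θ j = θ ℓ) ⊆ Ico ℓ (ℓ + i) := by
    intro j hj
    rw [mem_filter, mem_Icc] at hj
    rw [mem_Ico]
    constructor
    · by_contra! hjℓ
      have := hθ ⟨hj.1.1, by omega⟩ ⟨by omega, by omega⟩ (by omega : j ≤ ℓ - 1)
      linarith
    · by_contra! hjℓ
      have := hθ ⟨by omega, by omega⟩ ⟨hj.1.1, hj.1.2⟩ hjℓ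
      linarith
  have := card_le_card hsub
  rw [Nat.card_Ico] at this
  unfold knotMult at hν
  omega

end TruncatedPower

theorem stmt15_general (a b : ℝ) (m n : ℕ)
    (θ : ℕ → ℝ) (hθ : IsOpenKnot θ a b m n)
    (ℓ : ℕ) (hℓ1 : m + 1 ≤ ℓ) (hℓ2 : ℓ ≤ n) (hsep : θ (ℓ - 1) < θ ℓ)
    (ν : ℕ) (hν : ν + 1 ≤ knotMult θ (n + m) ℓ)
    (x : ℝ) (hx : x ∈ Set.Ico a b) :
    ((m - 1).choose ν : ℝ) * (max (θ ℓ - x) 0) ^ (m - 1 - ν) =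
      ∑ k ∈ Finset.Icc 1 (ℓ - m + ν),
        esymmF (m - 1 - ν) (Finset.Icc (k + 1) (k + m - 1)) (fun i => θ ℓ - θ i) *
          Nspl θ m k x := by
  have hmono := hθ.monotoneOn
  have hνm : ν + 2 ≤ m := by have := hθ.intMult ℓ hℓ1 hℓ2; omega
  have hflat : ∀ i ≤ ν, θ (ℓ + i) = θ ℓ := fun i =>
    knot_add_eq_of_lt_knotMult hmono (by omega) (by omega) hsep hν
  have hwindow : ∀ k, 1 ≤ k → k ≤ n → MonotoneOn θ (Set.Icc k (k + m)) := fun k hk hkn =>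
    hmono.mono (Set.Icc_subset_Icc hk (by omega))
  rcases lt_or_ge x (θ ℓ) with hxℓ | hxℓ
  · rw [max_eq_left (sub_nonneg.2 hxℓ.le), choose_mul_pow_eq_sum_esymmF_mul_Nspl (by omega)
      hmono (by rw [hθ.left m (by omega) le_rfl]; exact hx.1)
      (by rw [hθ.right (n + 1) le_rfl (by omega)]; exact hx.2)]
    refine (sum_subset (Icc_subset_Icc le_rfl (by omega)) fun k hk hk' => ?_).symm
    simp only [mem_Icc, not_and, not_le] at hk hk'
    rcases lt_or_ge k ℓ with hkℓ | hkℓ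
    · rw [esymmF_sub_knot_eq_zero hflat (by omega) (by omega) hkℓ, zero_mul]
    · have : θ ℓ ≤ θ k := hmono ⟨by omega, by omega⟩ ⟨by omega, by omega⟩ hkℓ
      rw [Nspl_eq_zero_of_lt (hwindow k hk.1 hk.2) (hxℓ.trans_le this), mul_zero]
  · rw [max_eq_right (sub_nonpos.2 hxℓ), zero_pow (by omega), mul_zero]
    refine (sum_eq_zero fun k hk => ?_).symm
    rw [mem_Icc] at hk
    have : θ (k + m) ≤ θ ℓ :=
      (hmono ⟨by omega, by omega⟩ ⟨by omega, by omega⟩ (by omega)).trans (hflat ν le_rfl).le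
    rw [Nspl_eq_zero_of_le (hwindow k hk.1 (by omega)) (this.trans hxℓ), mul_zero]

/-- Marsden identity for truncated powers. For an interior knot `θ_ℓ` of
multiplicity `μ` with `θ_ℓ > θ_{ℓ-1}`, `0 ≤ ν ≤ μ-1`, and `x ∈ [a,b)`:
`binom(m-1,ν)·(θ_ℓ - x)₊^{m-1-ν}
  = Σ_{k=1}^{ℓ-m+ν} σ_{m-1-ν}(θ_ℓ-θ_{k+1},…,θ_ℓ-θ_{k+m-1})·N_{m,k}(x)`. -/
theorem stmt15 (a b : ℝ) (hab : a < b) (m n : ℕ) (hm : 2 ≤ m) (hmn : m ≤ n)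
    (θ : ℕ → ℝ) (hθ : IsOpenKnot θ a b m n)
    (ℓ : ℕ) (hℓ1 : m + 1 ≤ ℓ) (hℓ2 : ℓ ≤ n) (hsep : θ (ℓ - 1) < θ ℓ)
    (ν : ℕ) (hν : ν + 1 ≤ knotMult θ (n + m) ℓ)
    (x : ℝ) (hx : x ∈ Set.Ico a b) :
    ((m - 1).choose ν : ℝ) * (max (θ ℓ - x) 0) ^ (m - 1 - ν) =
      ∑ k ∈ Finset.Icc 1 (ℓ - m + ν),
        esymmF (m - 1 - ν) (Finset.Icc (k + 1) (k + m - 1)) (fun i => θ ℓ - θ i) *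
          Nspl θ m k x :=
  stmt15_general a b m n θ hθ ℓ hℓ1 hℓ2 hsep ν hν x hx
end

section
/- (Vanishing moments of m-th derivatives of order-2m B-splines.) For 1 ≤ k ≤ n−m let g_k : ℝ → ℝ be the spline g_k(y) = Σ_{j=1}^{n} (D_m^T D_{m+1}^T ⋯ D_{2m−1}^T)_{j,k} N_{m,j}(y) (this function coincides with the m-th derivative of the order-2m B-spline N_{2m,k} wherever the latter exists). Then ∫_a^b y^ν g_k(y) dy = 0 for every integer 0 ≤ ν ≤ m−1; equivalently, ∫_a^b p(y) g_k(y) dy = 0 for every polynomial p of degree at most m−1. -/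
open scoped BigOperators
open MeasureTheory Matrix

/-!
Write `μ_{r,k}^{(q)} = ∫_a^b y^q N_{r,k}(y) dy`. Off the knots,
`N_{r+1,k}' = r (N_{r,k} / (θ_{k+r} - θ_k) - N_{r,k+1} / (θ_{k+r+1} - θ_{k+1}))`, and for `r ≥ m`
every `N_{r+1,k}` with knots in `θ_1, …, θ_{n+m}` is continuous, because no `m + 1` of these knots
coincide; it therefore vanishes at `a` and `b`. Integrating `y^q N_{r+1,k}'` by parts gives
`D_r μ_r^{(q)} = -q μ_{r+1}^{(q-1)}`, so applying `D_m, …, D_{2m-1}` in turn yields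
`∫_a^b y^q g_k = (-1)^m q (q-1) ⋯ (q-m+1) μ_{2m,k}^{(q-m)}`, which vanishes for `q < m`.
-/

open Set Filter Topology

lemma eventually_le_iff_nhdsGE (c x : ℝ) : ∀ᶠ y in 𝓝[≥] x, (c ≤ y ↔ c ≤ x) := by
  by_cases h : c ≤ x
  · filter_upwards [self_mem_nhdsWithin] with y hy
    exact iff_of_true (h.trans hy) h
  · filter_upwards [mem_nhdsWithin_of_mem_nhds (gt_mem_nhds (not_le.1 h))] with y hy
    exact iff_of_false (not_le.2 hy) h

lemma eventually_le_iff_nhds {c x : ℝ} (h : x ≠ c) : ∀ᶠ y in 𝓝 x, (c ≤ y ↔ c ≤ x) := by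
  rcases h.lt_or_gt with h | h
  · filter_upwards [gt_mem_nhds h] with y hy
    exact iff_of_false (not_le.2 hy) (not_le.2 h)
  · filter_upwards [lt_mem_nhds h] with y hy
    exact iff_of_true hy.le h.le

lemma continuousAt_mul_of_eq_zero_of_bounded {c f : ℝ → ℝ} {x C : ℝ} (hc : ContinuousAt c x)
    (hcx : c x = 0) (hf : ∀ y, |f y| ≤ C) : ContinuousAt (fun y => c y * f y) x := by
  have := (hcx ▸ hc.tendsto).zero_mul_isBoundedUnder_le (isBoundedUnder_of ⟨C, fun y => hf y⟩)
  simpa [ContinuousAt, hcx] using this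

section BSpline

variable {θ : ℕ → ℝ}

/-- Since `0⁻¹ = 0`, this also covers the degenerate case `θ k = θ (k + j)`. -/
lemma omegaB_eq_mul_inv {j k : ℕ} (h : θ k ≤ θ (k + j)) (x : ℝ) :
    omegaB θ j k x = (x - θ k) * (θ (k + j) - θ k)⁻¹ := by
  unfold omegaB
  split_ifs with hlt
  · rw [div_eq_mul_inv]
  · rw [le_antisymm h (not_lt.1 hlt), sub_self, _root_.inv_zero, mul_zero]

lemma omegaB_self (θ : ℕ → ℝ) (j k : ℕ) : omegaB θ j k (θ k) = 0 := by
  simp [omegaB]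

lemma omegaB_mem_Icc {j k : ℕ} {x : ℝ} (hx : x ∈ Icc (θ k) (θ (k + j))) :
    omegaB θ j k x ∈ Icc 0 1 := by
  unfold omegaB
  split_ifs with h
  · exact ⟨div_nonneg (by linarith [hx.1]) (by linarith),
      (div_le_one (by linarith)).2 (by linarith [hx.2])⟩
  · simp

lemma continuous_omegaB (θ : ℕ → ℝ) (j k : ℕ) : Continuous (omegaB θ j k) := by
  unfold omegaB
  split_ifs <;> fun_prop

lemma hasDerivAt_omegaB (hθ : Monotone θ) (j k : ℕ) (x : ℝ) :
    HasDerivAt (omegaB θ j k) (θ (k + j) - θ k)⁻¹ x := by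
  rw [funext (omegaB_eq_mul_inv (hθ (Nat.le_add_right k j)))]
  simpa using ((hasDerivAt_id x).sub_const (θ k)).mul_const (θ (k + j) - θ k)⁻¹

lemma Nspl_succ (θ : ℕ → ℝ) {r : ℕ} (hr : r ≠ 0) (k : ℕ) :
    Nspl θ (r + 1) k = fun x =>
      omegaB θ r k x * Nspl θ r k x + (1 - omegaB θ r (k + 1) x) * Nspl θ r (k + 1) x := by
  obtain ⟨r, rfl⟩ := Nat.exists_eq_succ_of_ne_zero hr
  rfl

lemma Nspl_one_eventuallyEq {l : Filter ℝ} {k : ℕ} {x : ℝ}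
    (h₀ : ∀ᶠ y in l, (θ k ≤ y ↔ θ k ≤ x)) (h₁ : ∀ᶠ y in l, (θ (k + 1) ≤ y ↔ θ (k + 1) ≤ x)) :
    Nspl θ 1 k =ᶠ[l] fun _ => Nspl θ 1 k x := by
  filter_upwards [h₀, h₁] with y e₀ e₁
  simp only [Nspl, ← not_le, e₀, e₁]

lemma Nspl_congr {θ' : ℕ → ℝ} {r k : ℕ} (h : ∀ i, k ≤ i → i ≤ k + r → θ i = θ' i) :
    Nspl θ r k = Nspl θ' r k := by
  induction r generalizing k with
  | zero => rfl
  | succ r ih =>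
    rcases Nat.eq_zero_or_pos r with rfl | hr
    · funext x
      simp only [Nspl, h k le_rfl (by omega), h (k + 1) (by omega) le_rfl]
    · have hω : ∀ j, k ≤ j → j ≤ k + 1 → omegaB θ r j = omegaB θ' r j := fun j h₁ h₂ => by
        funext x
        simp only [omegaB, h j h₁ (by omega), h (j + r) (by omega) (by omega)]
      rw [Nspl_succ θ hr.ne', Nspl_succ θ' hr.ne', hω k le_rfl (by omega),
        hω (k + 1) (by omega) le_rfl, ih fun i h₁ h₂ => h i h₁ (by omega),
        ih fun i h₁ h₂ => h i (by omega) (by omega)]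

lemma Nspl_eq_zero_of_notMem_Ico (hθ : Monotone θ) {r k : ℕ} {x : ℝ}
    (hx : x ∉ Ico (θ k) (θ (k + r))) : Nspl θ r k x = 0 := by
  induction r generalizing k with
  | zero => rfl
  | succ r ih =>
    rcases Nat.eq_zero_or_pos r with rfl | hr
    · simp only [Nspl]
      exact if_neg hx
    · have h₀ : x ∉ Ico (θ k) (θ (k + r)) := fun h => hx ⟨h.1, h.2.trans_le (hθ (by omega))⟩
      have h₁ : x ∉ Ico (θ (k + 1)) (θ (k + 1 + r)) := fun h =>
        hx ⟨(hθ (by omega)).trans h.1, by rw [show k + (r + 1) = k + 1 + r by omega]; exact h.2⟩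
      simp only [Nspl_succ θ hr.ne', ih h₀, ih h₁, mul_zero, add_zero]

lemma mem_Ico_of_Nspl_ne_zero (hθ : Monotone θ) {r k : ℕ} {x : ℝ} (h : Nspl θ r k x ≠ 0) :
    x ∈ Ico (θ k) (θ (k + r)) :=
  by_contra fun hx => h (Nspl_eq_zero_of_notMem_Ico hθ hx)

lemma abs_Nspl_le (hθ : Monotone θ) (r k : ℕ) (x : ℝ) : |Nspl θ r k x| ≤ 2 ^ r := by
  induction r generalizing k with
  | zero => simp [Nspl]
  | succ r ih =>
    rcases Nat.eq_zero_or_pos r with rfl | hr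
    · simp only [Nspl]
      split_ifs <;> norm_num
    have weight : ∀ c N : ℝ, (N ≠ 0 → c ∈ Icc 0 1) → |c * N| ≤ |N| := fun c N h => by
      rcases eq_or_ne N 0 with rfl | hN
      · simp
      · rw [abs_mul]
        exact mul_le_of_le_one_left (abs_nonneg _) (abs_le.2 ⟨by linarith [(h hN).1], (h hN).2⟩)
    have h₀ := weight (omegaB θ r k x) (Nspl θ r k x) fun hN =>
      omegaB_mem_Icc (Ico_subset_Icc_self (mem_Ico_of_Nspl_ne_zero hθ hN))
    have h₁ := weight (1 - omegaB θ r (k + 1) x) (Nspl θ r (k + 1) x) fun hN => by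
      have hw := omegaB_mem_Icc (Ico_subset_Icc_self (mem_Ico_of_Nspl_ne_zero hθ hN))
      exact ⟨by linarith [hw.2], by linarith [hw.1]⟩
    simp only [Nspl_succ θ hr.ne', pow_succ]
    calc _ ≤ |omegaB θ r k x * Nspl θ r k x| + |(1 - omegaB θ r (k + 1) x) * Nspl θ r (k + 1) x| :=
          abs_add_le _ _
      _ ≤ 2 ^ r * 2 := by linarith [ih k, ih (k + 1)]

lemma intervalIntegrable_Nspl (θ : ℕ → ℝ) (r k : ℕ) (a b : ℝ) :
    IntervalIntegrable (Nspl θ r k) volume a b := by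
  induction r generalizing k with
  | zero => exact intervalIntegrable_const
  | succ r ih =>
    rcases Nat.eq_zero_or_pos r with rfl | hr
    · have : Nspl θ 1 k = (Ico (θ k) (θ (k + 1))).indicator 1 := by
        ext x; simp [Nspl, indicator, Set.mem_Ico]
      rw [this, intervalIntegrable_iff]
      exact (integrableOn_const (by simp)).indicator measurableSet_Ico
    · rw [Nspl_succ θ hr.ne']
      exact ((ih k).continuousOn_mul (continuous_omegaB θ r k).continuousOn).add
        ((ih (k + 1)).continuousOn_mul
          (continuous_const.sub (continuous_omegaB θ r (k + 1))).continuousOn)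

noncomputable def splineDeriv (θ : ℕ → ℝ) (r k : ℕ) (x : ℝ) : ℝ :=
  r * (Nspl θ r k x * (θ (k + r) - θ k)⁻¹ - Nspl θ r (k + 1) x * (θ (k + 1 + r) - θ (k + 1))⁻¹)

/-- The left side is the product-rule derivative of the recursion for `Nspl θ (r + 2) k`. -/
lemma splineDeriv_succ (hθ : Monotone θ) (r k : ℕ) (x : ℝ) :
    (θ (k + (r + 1)) - θ k)⁻¹ * Nspl θ (r + 1) k x + omegaB θ (r + 1) k x * splineDeriv θ r k x
      + (-(θ (k + 1 + (r + 1)) - θ (k + 1))⁻¹ * Nspl θ (r + 1) (k + 1) x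
        + (1 - omegaB θ (r + 1) (k + 1) x) * splineDeriv θ r (k + 1) x)
      = splineDeriv θ (r + 1) k x := by
  unfold splineDeriv
  rcases Nat.eq_zero_or_pos r with rfl | hr
  · simp only [CharP.cast_eq_zero, zero_mul, mul_zero, add_zero]
    push_cast
    ring
  simp only [Nspl_succ θ hr.ne', omegaB_eq_mul_inv (hθ (Nat.le_add_right _ _)),
    show k + (r + 1) = k + 1 + r by omega, show k + 1 + (r + 1) = k + 1 + 1 + r by omega]
  set n₁ := Nspl θ r (k + 1) x
  set n₂ := Nspl θ r (k + 1 + 1) x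
  -- the coefficients of `n₁` and `n₂` agree only where these can be nonzero
  have c₁ : n₁ * ((1 - (x - θ (k + 1)) * (θ (k + 1 + r) - θ (k + 1))⁻¹) * (θ (k + 1 + r) - θ k)⁻¹
      - (x - θ (k + 1)) * (θ (k + 1 + r) - θ (k + 1))⁻¹ * (θ (k + 1 + 1 + r) - θ (k + 1))⁻¹
      + (x - θ k) * (θ (k + 1 + r) - θ k)⁻¹ * (θ (k + 1 + r) - θ (k + 1))⁻¹
      - (1 - (x - θ (k + 1)) * (θ (k + 1 + 1 + r) - θ (k + 1))⁻¹)
        * (θ (k + 1 + r) - θ (k + 1))⁻¹) = 0 := by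
    rcases eq_or_ne n₁ 0 with h | h
    · rw [h, zero_mul]
    have hs := mem_Ico_of_Nspl_ne_zero hθ h
    have h₀ : θ k ≤ θ (k + 1) := hθ (by omega)
    have h₂ : θ (k + 1 + r) ≤ θ (k + 1 + 1 + r) := hθ (by omega)
    have : θ (k + 1 + r) - θ (k + 1) ≠ 0 := by linarith [hs.1, hs.2]
    have : θ (k + 1 + r) - θ k ≠ 0 := by linarith [hs.1, hs.2]
    have : θ (k + 1 + 1 + r) - θ (k + 1) ≠ 0 := by linarith [hs.1, hs.2]
    field_simp
    ring
  have c₂ : n₂ * ((1 - (x - θ (k + 1)) * (θ (k + 1 + 1 + r) - θ (k + 1))⁻¹)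
        * (θ (k + 1 + 1 + r) - θ (k + 1 + 1))⁻¹
      - (1 - (x - θ (k + 1 + 1)) * (θ (k + 1 + 1 + r) - θ (k + 1 + 1))⁻¹)
        * (θ (k + 1 + 1 + r) - θ (k + 1))⁻¹) = 0 := by
    rcases eq_or_ne n₂ 0 with h | h
    · rw [h, zero_mul]
    have hs := mem_Ico_of_Nspl_ne_zero hθ h
    have h₁ : θ (k + 1) ≤ θ (k + 1 + 1) := hθ (by omega)
    have : θ (k + 1 + 1 + r) - θ (k + 1 + 1) ≠ 0 := by linarith [hs.1, hs.2]
    have : θ (k + 1 + 1 + r) - θ (k + 1) ≠ 0 := by linarith [hs.1, hs.2]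
    field_simp
    ring
  push_cast
  linear_combination (-(r : ℝ)) * (c₁ + c₂)

lemma hasDerivAt_Nspl (hθ : Monotone θ) {x : ℝ} (hx : x ∉ range θ) (r k : ℕ) :
    HasDerivAt (Nspl θ (r + 1) k) (splineDeriv θ r k x) x := by
  induction r generalizing k with
  | zero =>
    have hne : ∀ i, x ≠ θ i := fun i h => hx ⟨i, h.symm⟩
    simpa [splineDeriv] using (hasDerivAt_const x (Nspl θ 1 k x)).congr_of_eventuallyEq
      (Nspl_one_eventuallyEq (eventually_le_iff_nhds (hne k)) (eventually_le_iff_nhds (hne (k + 1))))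
  | succ r ih =>
    rw [Nspl_succ θ r.succ_ne_zero]
    exact (((hasDerivAt_omegaB hθ (r + 1) k x).mul (ih k)).add
      (((hasDerivAt_omegaB hθ (r + 1) (k + 1) x).const_sub 1).mul (ih (k + 1)))).congr_deriv
      (splineDeriv_succ hθ r k x)

lemma continuousWithinAt_Nspl_Ici (θ : ℕ → ℝ) (r k : ℕ) (x : ℝ) :
    ContinuousWithinAt (Nspl θ r k) (Ici x) x := by
  induction r generalizing k with
  | zero => exact continuousWithinAt_const
  | succ r ih =>
    rcases Nat.eq_zero_or_pos r with rfl | hr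
    · exact continuousWithinAt_const.congr_of_eventuallyEq
        (Nspl_one_eventuallyEq (eventually_le_iff_nhdsGE _ x) (eventually_le_iff_nhdsGE _ x)) rfl
    · rw [Nspl_succ θ hr.ne']
      exact ((continuous_omegaB θ r k).continuousWithinAt.mul (ih k)).add
        (((continuous_omegaB θ r (k + 1)).continuousWithinAt.const_sub 1).mul (ih (k + 1)))

lemma Nspl_eq_pow (hθ : Monotone θ) {r k : ℕ} (h : θ (k + r) ≤ θ (k + 1)) {y : ℝ}
    (hy : y ∈ Ico (θ k) (θ (k + 1))) :
    Nspl θ (r + 1) k y = ((y - θ k) / (θ (k + 1) - θ k)) ^ r := by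
  induction r with
  | zero => simp [Nspl, hy.1, hy.2]
  | succ r ih =>
    have he : θ (k + (r + 1)) = θ (k + 1) := le_antisymm h (hθ (by omega))
    have hz : Nspl θ (r + 1) (k + 1) y = 0 :=
      Nspl_eq_zero_of_notMem_Ico hθ fun h' => absurd h'.1 (not_le.2 hy.2)
    simp only [Nspl_succ θ r.succ_ne_zero, hz, mul_zero, add_zero,
      ih ((hθ (by omega)).trans h), omegaB_eq_mul_inv (hθ (Nat.le_add_right k _)), he]
    rw [pow_succ, div_eq_mul_inv]
    ring

lemma Nspl_self_eq_one (hθ : Monotone θ) {r k : ℕ} (h : θ (k + r) ≤ θ k)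
    (h' : θ k < θ (k + r + 1)) : Nspl θ (r + 1) k (θ k) = 1 := by
  induction r generalizing k with
  | zero => simp [Nspl, h']
  | succ r ih =>
    have he : θ (k + 1) = θ k := le_antisymm ((hθ (by omega)).trans h) (hθ (by omega))
    have h₁ : θ (k + 1 + r) ≤ θ (k + 1) := by
      rw [he, show k + 1 + r = k + (r + 1) by omega]; exact h
    have h₁' : θ (k + 1) < θ (k + 1 + r + 1) := by
      rw [he, show k + 1 + r + 1 = k + (r + 1) + 1 by omega]; exact h'
    simp only [Nspl_succ θ r.succ_ne_zero, omegaB_self, zero_mul, zero_add]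
    rw [← he, omegaB_self, sub_zero, one_mul, ih h₁ h₁']

/-- At a knot of multiplicity `r + 1` strictly inside the support of a spline of order `r + 2`,
the jumps of the two terms of the recursion cancel. -/
lemma continuousAt_Nspl_of_interior (hθ : Monotone θ) {r k : ℕ}
    (h : θ (k + 1) = θ (k + 1 + r)) (hk : θ k < θ (k + 1)) (hr : θ (k + 1) < θ (k + 1 + r + 1)) :
    ContinuousAt (Nspl θ (r + 1 + 1) k) (θ (k + 1)) := by
  have hval : Nspl θ (r + 1 + 1) k (θ (k + 1)) = 1 := by
    have hz : Nspl θ (r + 1) k (θ (k + 1)) = 0 := Nspl_eq_zero_of_notMem_Ico hθ fun h' =>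
      absurd h'.2 (by rw [show k + (r + 1) = k + 1 + r by omega, ← h]; exact lt_irrefl _)
    simp only [Nspl_succ θ r.succ_ne_zero, hz, mul_zero, zero_add, omegaB_self, sub_zero, one_mul]
    exact Nspl_self_eq_one hθ h.ge hr
  have hpow : ∀ y ∈ Ico (θ k) (θ (k + 1)),
      Nspl θ (r + 1 + 1) k y = ((y - θ k) / (θ (k + 1) - θ k)) ^ (r + 1) :=
    fun y hy => Nspl_eq_pow hθ (by rw [show k + (r + 1) = k + 1 + r by omega, h]) hy
  rw [continuousAt_iff_continuous_left_right]
  refine ⟨?_, continuousWithinAt_Nspl_Ici θ _ k _⟩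
  refine (Continuous.continuousWithinAt (by fun_prop)).congr_of_eventuallyEq
    (f := fun y => ((y - θ k) / (θ (k + 1) - θ k)) ^ (r + 1)) ?_ ?_
  · filter_upwards [Ioc_mem_nhdsLE hk] with y hy
    rcases hy.2.lt_or_eq with hlt | rfl
    · exact hpow y ⟨hy.1.le, hlt⟩
    · rw [hval, div_self (sub_ne_zero.2 hk.ne'), one_pow]
  · rw [hval, div_self (sub_ne_zero.2 hk.ne'), one_pow]

lemma continuousAt_Nspl (hθ : Monotone θ) {r k : ℕ} {x : ℝ}
    (h₀ : θ k = θ (k + r) → x ≠ θ k) (h₁ : θ (k + 1) = θ (k + 1 + r) → x ≠ θ (k + 1)) :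
    ContinuousAt (Nspl θ (r + 1) k) x := by
  induction r generalizing k with
  | zero =>
    exact continuousAt_const.congr (Nspl_one_eventuallyEq
      (eventually_le_iff_nhds (h₀ rfl)) (eventually_le_iff_nhds (h₁ rfl))).symm
  | succ r ih =>
    by_cases hB : θ (k + 1) = θ (k + 1 + r) ∧ x = θ (k + 1)
    · obtain ⟨hB, rfl⟩ := hB
      have hk : θ k < θ (k + 1) := (hθ (by omega)).lt_of_ne fun he =>
        h₀ (by rw [he, hB, show k + 1 + r = k + (r + 1) by omega]) he.symm
      have hr : θ (k + 1) < θ (k + 1 + r + 1) := (hθ (by omega)).lt_of_ne fun he =>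
        h₁ (by rw [he, show k + 1 + r + 1 = k + 1 + (r + 1) by omega]) rfl
      exact continuousAt_Nspl_of_interior hθ hB hk hr
    rw [Nspl_succ θ r.succ_ne_zero]
    have t₀ : ContinuousAt (fun y => omegaB θ (r + 1) k y * Nspl θ (r + 1) k y) x := by
      by_cases hA : θ k = θ (k + r) ∧ x = θ k
      · exact continuousAt_mul_of_eq_zero_of_bounded (continuous_omegaB θ _ k).continuousAt
          (by rw [hA.2, omegaB_self]) (abs_Nspl_le hθ _ k)
      · exact (continuous_omegaB θ _ k).continuousAt.mul
          (ih (fun h hx => hA ⟨h, hx⟩) (fun h hx => hB ⟨h, hx⟩))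
    have t₁ : ContinuousAt
        (fun y => (1 - omegaB θ (r + 1) (k + 1) y) * Nspl θ (r + 1) (k + 1) y) x := by
      by_cases hC : θ (k + 1 + 1) = θ (k + 1 + 1 + r) ∧ x = θ (k + 1 + 1)
      · obtain ⟨hC, rfl⟩ := hC
        have hlt : θ (k + 1) < θ (k + 1 + 1) := (hθ (by omega)).lt_of_ne fun he =>
          hB ⟨le_antisymm (hθ (by omega)) (by rw [he, hC]; exact hθ (by omega)), he.symm⟩
        refine continuousAt_mul_of_eq_zero_of_bounded
          (continuous_const.sub (continuous_omegaB θ _ (k + 1))).continuousAt ?_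
          (abs_Nspl_le hθ _ (k + 1))
        rw [omegaB_eq_mul_inv (hθ (by omega)), show k + 1 + (r + 1) = k + 1 + 1 + r by omega, ← hC,
          mul_inv_cancel₀ (sub_ne_zero.2 hlt.ne'), sub_self]
      · exact (continuous_const.sub (continuous_omegaB θ _ (k + 1))).continuousAt.mul
          (ih (fun h hx => hB ⟨h, hx⟩) (fun h hx => hC ⟨h, hx⟩))
    exact t₀.add t₁

lemma continuous_Nspl (hθ : Monotone θ) {r k : ℕ} (h₀ : θ k < θ (k + r))
    (h₁ : θ (k + 1) < θ (k + 1 + r)) : Continuous (Nspl θ (r + 1) k) :=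
  continuous_iff_continuousAt.2 fun _ =>
    continuousAt_Nspl hθ (fun h => absurd h h₀.ne) (fun h => absurd h h₁.ne)

lemma Nspl_eq_zero_of_continuousAt (hθ : Monotone θ) {r k : ℕ} {x : ℝ}
    (hc : ContinuousAt (Nspl θ r k) x) (hx : x ≤ θ k) : Nspl θ r k x = 0 := by
  have : Tendsto (Nspl θ r k) (𝓝[<] x) (𝓝 0) :=
    tendsto_const_nhds.congr' (eventually_nhdsWithin_of_forall fun y (hy : y < x) =>
      (Nspl_eq_zero_of_notMem_Ico hθ fun h => absurd (hy.trans_le hx) (not_lt.2 h.1)).symm)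
  exact tendsto_nhds_unique (hc.tendsto.mono_left nhdsWithin_le_nhds) this

end BSpline

section Moments

variable {θ : ℕ → ℝ} {a b : ℝ}

noncomputable def splineMoment (θ : ℕ → ℝ) (a b : ℝ) (r q k : ℕ) : ℝ :=
  ∫ y in a..b, y ^ q * Nspl θ r k y

lemma intervalIntegrable_pow_mul_Nspl (θ : ℕ → ℝ) (a b : ℝ) (q r k : ℕ) :
    IntervalIntegrable (fun y => y ^ q * Nspl θ r k y) volume a b :=
  (intervalIntegrable_Nspl θ r k a b).continuousOn_mul (continuous_pow q).continuousOn

lemma intervalIntegrable_sum_Nspl {ι : Type*} [Fintype ι] (c : ι → ℝ) (κ : ι → ℕ) (r : ℕ) :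
    IntervalIntegrable (fun y => ∑ j, c j * Nspl θ r (κ j) y) volume a b := by
  have := IntervalIntegrable.sum Finset.univ fun j _ =>
    (intervalIntegrable_Nspl θ r (κ j) a b).const_mul (c j)
  rwa [Finset.sum_fn] at this

lemma integral_pow_mul_sum_Nspl {ι : Type*} [Fintype ι] (c : ι → ℝ) (κ : ι → ℕ) (r q : ℕ) :
    ∫ y in a..b, y ^ q * ∑ j, c j * Nspl θ r (κ j) y
      = ∑ j, c j * splineMoment θ a b r q (κ j) := by
  simp_rw [Finset.mul_sum, mul_left_comm _ (c _)]
  rw [intervalIntegral.integral_finsetSum fun j _ =>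
    (intervalIntegrable_pow_mul_Nspl θ a b q r (κ j)).const_mul (c j)]
  simp_rw [intervalIntegral.integral_const_mul, splineMoment]

lemma integral_eval_mul_eq_zero {f : ℝ → ℝ} {d : ℕ} (hf : IntervalIntegrable f volume a b)
    (h : ∀ ν ≤ d, ∫ y in a..b, y ^ ν * f y = 0) {p : Polynomial ℝ} (hp : p.natDegree ≤ d) :
    ∫ y in a..b, p.eval y * f y = 0 := by
  simp_rw [Polynomial.eval_eq_sum_range' (Nat.lt_succ_of_le hp), Finset.sum_mul, mul_assoc]
  rw [intervalIntegral.integral_finsetSum fun i _ =>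
    (hf.continuousOn_mul (continuous_pow i).continuousOn).const_mul _]
  refine Finset.sum_eq_zero fun i hi => ?_
  rw [intervalIntegral.integral_const_mul, h i (Nat.lt_succ_iff.1 (Finset.mem_range.1 hi)),
    mul_zero]

/-- Integration by parts of `y ^ q` against `hasDerivAt_Nspl`. -/
lemma splineMoment_step (hθ : Monotone θ) (hab : a ≤ b) {r k : ℕ}
    (hc : Continuous (Nspl θ (r + 1) k)) (ha : a ≤ θ k) (hb : θ (k + 1 + r) ≤ b) (q : ℕ) :
    r / (θ (k + r) - θ k) * splineMoment θ a b r q k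
      - r / (θ (k + 1 + r) - θ (k + 1)) * splineMoment θ a b r q (k + 1)
      = -q * splineMoment θ a b (r + 1) (q - 1) k := by
  have hint := intervalIntegrable_pow_mul_Nspl θ a b
  have hftc := integral_eq_of_hasDerivAt_off_countable_of_le
    (fun y => y ^ q * Nspl θ (r + 1) k y)
    (fun y => q * (y ^ (q - 1) * Nspl θ (r + 1) k y)
      + (r * (θ (k + r) - θ k)⁻¹ * (y ^ q * Nspl θ r k y)
        - r * (θ (k + 1 + r) - θ (k + 1))⁻¹ * (y ^ q * Nspl θ r (k + 1) y)))
    hab (countable_range θ) ((continuous_pow q).mul hc).continuousOn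
    (fun x hx => ((hasDerivAt_pow q x).mul (hasDerivAt_Nspl hθ hx.2 r k)).congr_deriv
      (by unfold splineDeriv; ring))
    (((hint _ _ _).const_mul _).add (((hint _ _ _).const_mul _).sub ((hint _ _ _).const_mul _)))
  have hNb : Nspl θ (r + 1) k b = 0 := Nspl_eq_zero_of_notMem_Ico hθ fun h =>
    absurd h.2 (not_lt.2 (le_trans (by rw [show k + (r + 1) = k + 1 + r by omega]) hb))
  have hNa : Nspl θ (r + 1) k a = 0 := Nspl_eq_zero_of_continuousAt hθ hc.continuousAt ha
  rw [intervalIntegral.integral_add ((hint _ _ _).const_mul _)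
      (((hint _ _ _).const_mul _).sub ((hint _ _ _).const_mul _)),
    intervalIntegral.integral_sub ((hint _ _ _).const_mul _) ((hint _ _ _).const_mul _),
    intervalIntegral.integral_const_mul, intervalIntegral.integral_const_mul,
    intervalIntegral.integral_const_mul, hNa, hNb, mul_zero, mul_zero, sub_zero] at hftc
  simp only [splineMoment, div_eq_mul_inv]
  linarith

lemma Dmat_mulVec_apply (θ : ℕ → ℝ) (ord p q : ℕ) (v : Fin q → ℝ) (k : Fin p)
    (hk : k.1 + 1 < q) :
    (Dmat θ ord p q *ᵥ v) k
      = ord / (θ (k + 1 + ord) - θ (k + 1)) * v ⟨k, by omega⟩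
        - ord / (θ (k + 1 + 1 + ord) - θ (k + 1 + 1)) * v ⟨k + 1, hk⟩ := by
  rw [Matrix.mulVec, dotProduct, Fintype.sum_eq_add ⟨k, by omega⟩ ⟨k + 1, hk⟩
    (by simp [Fin.ext_iff]) fun j hj => ?_]
  · simp [Dmat, sub_eq_add_neg]
  · have h₀ : j.1 ≠ k.1 := fun h => hj.1 (Fin.ext h)
    have h₁ : j.1 ≠ k.1 + 1 := fun h => hj.2 (Fin.ext h)
    simp [Dmat, h₀, h₁]

variable {m n : ℕ}

lemma Dprod_mulVec_splineMoment (hθ : Monotone θ) (ha : a ≤ θ 1) (hb : θ (n + m) ≤ b)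
    (hrun : ∀ i, 1 ≤ i → i ≤ n → θ i < θ (i + m)) (q i : ℕ) :
    Dprod θ m n i *ᵥ (fun j : Fin n => splineMoment θ a b m q (j + 1))
      = fun k : Fin (n - i - 1) => (-1) ^ (i + 1) * (q.descFactorial (i + 1) : ℝ)
          * splineMoment θ a b (m + i + 1) (q - (i + 1)) (k + 1) := by
  have step : ∀ r k q, m ≤ r → k + 2 + r ≤ n + m →
      r / (θ (k + 1 + r) - θ (k + 1)) * splineMoment θ a b r q (k + 1)
        - r / (θ (k + 1 + 1 + r) - θ (k + 1 + 1)) * splineMoment θ a b r q (k + 1 + 1)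
        = -q * splineMoment θ a b (r + 1) (q - 1) (k + 1) := fun r k q hr hk =>
    splineMoment_step hθ (ha.trans ((hθ (by omega)).trans hb))
      (continuous_Nspl hθ ((hrun (k + 1) (by omega) (by omega)).trans_le (hθ (by omega)))
        ((hrun (k + 1 + 1) (by omega) (by omega)).trans_le (hθ (by omega))))
      (ha.trans (hθ (by omega))) ((hθ (by omega)).trans hb) q
  induction i with
  | zero =>
    funext k
    rw [Dprod, Dmat_mulVec_apply _ _ _ _ _ _ (by omega), step m k q le_rfl (by omega)]
    simp
  | succ i ih =>
    funext k
    rw [Dprod, ← Matrix.mulVec_mulVec, ih, Dmat_mulVec_apply _ _ _ _ _ _ (by omega),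
      show m + (i + 1) + 1 = m + i + 1 + 1 by omega, show q - (i + 1 + 1) = q - (i + 1) - 1 by omega,
      Nat.descFactorial_succ q (i + 1), Nat.cast_mul]
    have := step (m + i + 1) k (q - (i + 1)) (by omega) (by omega)
    linear_combination (-1) ^ (i + 1) * (q.descFactorial (i + 1) : ℝ) * this

lemma Dprod_mulVec_splineMoment_eq_zero (hθ : Monotone θ) (ha : a ≤ θ 1) (hb : θ (n + m) ≤ b)
    (hrun : ∀ i, 1 ≤ i → i ≤ n → θ i < θ (i + m)) {q : ℕ} (hq : q < m) :
    Dprod θ m n (m - 1) *ᵥ (fun j : Fin n => splineMoment θ a b m q (j + 1)) = 0 := by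
  rw [Dprod_mulVec_splineMoment hθ ha hb hrun, Nat.sub_add_cancel (by omega : 1 ≤ m),
    Nat.descFactorial_eq_zero_iff_lt.2 hq]
  ext k
  simp

end Moments

section OpenKnots

/-- Continuing the knots constantly beyond `θ 1` and `θ T` makes them monotone on all of `ℕ`
without changing any B-spline whose knots lie among `θ 1, …, θ T`. -/
def extendKnots (θ : ℕ → ℝ) (T : ℕ) : ℕ → ℝ := fun i => θ (max 1 (min i T))

lemma extendKnots_of_mem {θ : ℕ → ℝ} {T i : ℕ} (h₁ : 1 ≤ i) (h₂ : i ≤ T) :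
    extendKnots θ T i = θ i := by
  simp [extendKnots, h₁, h₂]

lemma monotone_extendKnots {θ : ℕ → ℝ} {T : ℕ} (h : ∀ i, 1 ≤ i → i < T → θ i ≤ θ (i + 1)) :
    Monotone (extendKnots θ T) := by
  refine monotone_nat_of_le_succ fun i => ?_
  unfold extendKnots
  by_cases hi : 1 ≤ i ∧ i < T
  · rw [show max 1 (min (i + 1) T) = max 1 (min i T) + 1 by omega]
    exact h _ (by omega) (by omega)
  · rw [show max 1 (min (i + 1) T) = max 1 (min i T) by omega]

lemma Dmat_congr {θ θ' : ℕ → ℝ} {ord p q : ℕ} (h : ∀ i, 1 ≤ i → i ≤ p + 1 + ord → θ i = θ' i) :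
    Dmat θ ord p q = Dmat θ' ord p q := by
  ext k j
  have := k.2
  simp only [Dmat, Matrix.of_apply, h (k + 1) (by omega) (by omega),
    h (k + 1 + ord) (by omega) (by omega), h (k + 2) (by omega) (by omega),
    h (k + 2 + ord) (by omega) (by omega)]

lemma Dprod_congr {θ θ' : ℕ → ℝ} {m n ν : ℕ} (hν : ν < n)
    (h : ∀ i, 1 ≤ i → i ≤ n + m → θ i = θ' i) : Dprod θ m n ν = Dprod θ' m n ν := by
  induction ν with
  | zero => exact Dmat_congr fun i h₁ h₂ => h i h₁ (by omega)
  | succ ν ih =>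
    rw [Dprod, Dprod, ih (by omega), Dmat_congr fun i h₁ h₂ => h i h₁ (by omega)]

namespace IsOpenKnot

variable {θ : ℕ → ℝ} {a b : ℝ} {m n : ℕ}

lemma monotoneOn_s16 (hθ : IsOpenKnot θ a b m n) : MonotoneOn θ (Icc 1 (n + m)) :=
  fun i hi j hj hij => by
    have := monotone_extendKnots hθ.mono hij
    rwa [extendKnots_of_mem hi.1 hi.2, extendKnots_of_mem hj.1 hj.2] at this

/-- A run of `m + 1` equal knots cannot contain an interior knot, whose multiplicity is at most
`m - 1`, so it would contain both `θ m = a` and `θ (n + 1) = b`. -/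
lemma apply_lt_apply_add (hθ : IsOpenKnot θ a b m n) (hab : a < b) {i : ℕ} (h₁ : 1 ≤ i)
    (h₂ : i ≤ n) : θ i < θ (i + m) := by
  by_contra! hle
  have hconst : ∀ j, i ≤ j → j ≤ i + m → θ j = θ i := fun j hj₁ hj₂ =>
    le_antisymm ((hθ.monotoneOn_s16 ⟨by omega, by omega⟩ ⟨by omega, by omega⟩ hj₂).trans hle)
      (hθ.monotoneOn_s16 ⟨h₁, by omega⟩ ⟨by omega, by omega⟩ hj₁)
  have interior : ∀ ℓ, i ≤ ℓ → ℓ ≤ i + m → m + 1 ≤ ℓ → ℓ ≤ n → False :=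
    fun ℓ hℓ₁ hℓ₂ hℓ₃ hℓ₄ => by
      have hsub : Finset.Icc i (i + m) ⊆ (Finset.Icc 1 (n + m)).filter fun j => θ j = θ ℓ :=
        fun j hj => by
          rw [Finset.mem_Icc] at hj
          rw [Finset.mem_filter, Finset.mem_Icc, hconst j hj.1 hj.2, hconst ℓ hℓ₁ hℓ₂]
          exact ⟨⟨by omega, by omega⟩, rfl⟩
      have := (Finset.card_le_card hsub).trans (hθ.intMult ℓ hℓ₃ hℓ₄)
      rw [Nat.card_Icc] at this
      omega
  by_cases hi : m + 1 ≤ i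
  · exact interior i le_rfl (by omega) hi h₂
  by_cases hi' : i + m ≤ n
  · exact interior (i + m) (by omega) le_rfl (by omega) hi'
  have := (hconst m (by omega) (by omega)).trans (hconst (n + 1) (by omega) (by omega)).symm
  rw [hθ.left m (by omega) le_rfl, hθ.right (n + 1) le_rfl (by omega)] at this
  exact hab.ne this

lemma Dprod_mulVec_splineMoment_eq_zero (hθ : IsOpenKnot θ a b m n) (hab : a < b) (hmn : m ≤ n)
    {q : ℕ} (hq : q < m) :
    Dprod θ m n (m - 1) *ᵥ (fun j : Fin n => splineMoment θ a b m q (j + 1)) = 0 := by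
  have hθθ' : ∀ i, 1 ≤ i → i ≤ n + m → θ i = extendKnots θ (n + m) i := fun i h₁ h₂ =>
    (extendKnots_of_mem h₁ h₂).symm
  have hμ : (fun j : Fin n => splineMoment θ a b m q (j + 1))
      = fun j : Fin n => splineMoment (extendKnots θ (n + m)) a b m q (j + 1) := funext fun j => by
    have := j.2
    unfold splineMoment
    rw [Nspl_congr (r := m) (k := j + 1) fun i h₁ h₂ => hθθ' i (by omega) (by omega)]
  rw [hμ, Dprod_congr (by omega) hθθ']
  refine _root_.Dprod_mulVec_splineMoment_eq_zero (monotone_extendKnots hθ.mono) ?_ ?_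
    (fun i h₁ h₂ => ?_) hq
  · rw [← hθθ' 1 le_rfl (by omega), hθ.left 1 le_rfl (by omega)]
  · rw [← hθθ' (n + m) (by omega) le_rfl, hθ.right (n + m) (by omega) le_rfl]
  · rw [← hθθ' i h₁ (by omega), ← hθθ' (i + m) (by omega) (by omega)]
    exact hθ.apply_lt_apply_add hab h₁ h₂

end IsOpenKnot

end OpenKnots

/-- vanishing moments of `m`-th derivatives of order-`2m` B-splines.
For `1 ≤ k ≤ n-m` the spline `g_k(y) = Σ_j (D_mᵀ⋯D_{2m-1}ᵀ)_{j,k} N_{m,j}(y)` satisfies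
`∫_a^b y^ν g_k(y) dy = 0` for `0 ≤ ν ≤ m-1`; equivalently `∫_a^b p(y) g_k(y) dy = 0` for
every polynomial `p` of degree at most `m-1`. -/
theorem stmt16 (a b : ℝ) (hab : a < b) (m n : ℕ) (hm : 2 ≤ m) (hmn : m ≤ n)
    (θ : ℕ → ℝ) (hθ : IsOpenKnot θ a b m n)
    (g : Fin (n - m) → ℝ → ℝ)
    (hg : ∀ (k : Fin (n - m)) (y : ℝ),
      g k y = ∑ j : Fin n, DprodFull θ m n (by omega) k j * Nspl θ m (j.1 + 1) y) :
    (∀ k : Fin (n - m), ∀ ν : ℕ, ν ≤ m - 1 → (∫ y in a..b, y ^ ν * g k y) = 0)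
    ∧ (∀ k : Fin (n - m), ∀ p : Polynomial ℝ, p.natDegree ≤ m - 1 →
        (∫ y in a..b, Polynomial.eval y p * g k y) = 0) := by
  have hmoment : ∀ k : Fin (n - m), ∀ ν, ν ≤ m - 1 → ∫ y in a..b, y ^ ν * g k y = 0 := by
    intro k ν hν
    simp_rw [hg k]
    rw [integral_pow_mul_sum_Nspl]
    exact congrFun (hθ.Dprod_mulVec_splineMoment_eq_zero hab hmn (by omega : ν < m)) _
  refine ⟨hmoment, fun k p hp => integral_eval_mul_eq_zero ?_ (hmoment k) hp⟩
  rw [funext (hg k)]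
  exact intervalIntegrable_sum_Nspl _ _ m
end
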